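/- Let T be a rooted tree with leaves v_1,…,v_n and edges e_1,…,e_m, and let I_p(T) be its path incidence matrix, the n×m matrix with (i,j)-entry 1 if edge e_j lies on the path from leaf v_i to the root and 0 otherwise. Then the ancestral matrix satisfies C(T) = I_p(T)·I_p(T)^t; in particular, C(T) is a positive semidefinite symmetric matrix. -/

import Mathlib

open Matrix

/-- A rooted tree on a finite vertex type `V`, encoded by its root and the
parent function: the root is its own parent, and iterating the parent function
from any vertex eventually reaches the root.  (These conditions force the graph
whose edges join each non-root vertex to its parent to be a tree.) -/
structure TreeOn (V : Type) [Fintype V] [DecidableEq V] where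
  root : V
  parent : V → V
  parent_root : parent root = root
  reaches : ∀ v, ∃ k, parent^[k] v = root

namespace TreeOn

variable {V : Type} [Fintype V] [DecidableEq V]

/-- `u` is a (weak) ancestor of `v`: some iterate of the parent function sends
`v` to `u`.  (Any ancestor is reached within `Fintype.card V` steps, so the
bound makes the predicate decidable without changing its meaning.) -/
def IsAncestor (T : TreeOn V) (u v : V) : Prop :=
  ∃ k, k ≤ Fintype.card V ∧ T.parent^[k] v = u

instance (T : TreeOn V) (u v : V) : Decidable (T.IsAncestor u v) := by
  have h : T.IsAncestor u v ↔ ∃ k ∈ Finset.range (Fintype.card V + 1), T.parent^[k] v = u := by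
    simp [IsAncestor, Nat.lt_succ_iff]
  rw [h]; infer_instance

/-- The level of a vertex: its distance to the root. -/
def level (T : TreeOn V) (v : V) : ℕ := Nat.find (T.reaches v)

/-- The ancestral level `ℓ(v ∨ w)`: the level of the lowest common ancestor
of `v` and `w`, i.e. the greatest level of a common ancestor. -/
def lcaLevel (T : TreeOn V) (v w : V) : ℕ :=
  (Finset.univ.filter fun u => T.IsAncestor u v ∧ T.IsAncestor u w).sup T.level

/-- A leaf is a vertex with no children. -/
def IsLeaf (T : TreeOn V) (v : V) : Prop := ∀ u, T.parent u = v → u = v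

instance (T : TreeOn V) : DecidablePred T.IsLeaf := fun v =>
  inferInstanceAs (Decidable (∀ u, T.parent u = v → u = v))

/-- The type of leaves of `T`. -/
abbrev Leaf (T : TreeOn V) := {v : V // T.IsLeaf v}

/-- The ancestral matrix `C(T)`, indexed by the leaves of `T`, whose
`(v, w)` entry is the ancestral level `ℓ(v ∨ w)`. -/
noncomputable def ancMatrix (T : TreeOn V) : Matrix T.Leaf T.Leaf ℝ :=
  Matrix.of fun v w => (T.lcaLevel v.1 w.1 : ℝ)

/-- The ancestral spectral radius `ρ_C(T)`: the largest eigenvalue of `C(T)`. -/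
noncomputable def rhoC (T : TreeOn V) : ℝ :=
  sSup {μ : ℝ | ∃ x : T.Leaf → ℝ, x ≠ 0 ∧ T.ancMatrix.mulVec x = μ • x}

/-- The underlying simple graph of the tree: each non-root vertex is joined
to its parent. -/
def graph (T : TreeOn V) : SimpleGraph V :=
  SimpleGraph.fromRel fun u v => T.parent u = v ∧ u ≠ v

/-- The number of children (outdegree) of a vertex. -/
def childCount (T : TreeOn V) (v : V) : ℕ :=
  (Finset.univ.filter fun u => T.parent u = v ∧ u ≠ v).card

end TreeOn

namespace TreeOn

variable {V : Type} [Fintype V] [DecidableEq V]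

/-- The edges of the tree, identified with their endpoints further from the
root: every non-root vertex `v` corresponds to the edge joining `v` to its
parent. -/
abbrev Edge (T : TreeOn V) := {v : V // v ≠ T.root}

/-- The path incidence matrix `I_p(T)`: rows are indexed by the leaves, columns
by the edges; the entry is `1` if the edge lies on the path from the leaf to
the root (i.e. its lower endpoint is an ancestor of the leaf) and `0`
otherwise. -/
noncomputable def pathIncidence (T : TreeOn V) : Matrix T.Leaf T.Edge ℝ :=
  Matrix.of fun v e => if T.IsAncestor e.1 v.1 then 1 else 0

end TreeOn

namespace TreeOn

variable {V : Type} [Fintype V] [DecidableEq V] (T : TreeOn V)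

lemma parent_iterate_level (v : V) : T.parent^[T.level v] v = T.root :=
  Nat.find_spec (T.reaches v)

lemma level_le_of_iterate {v : V} {k : ℕ} (h : T.parent^[k] v = T.root) : T.level v ≤ k :=
  Nat.find_le h

lemma parent_iterate_root (k : ℕ) : T.parent^[k] T.root = T.root := by
  induction k with
  | zero => rfl
  | succ n ih => rw [Function.iterate_succ_apply', ih, T.parent_root]

lemma level_iterate {v : V} {k : ℕ} (hk : k ≤ T.level v) :
    T.level (T.parent^[k] v) = T.level v - k := by
  apply le_antisymm
  · apply T.level_le_of_iterate
    rw [← Function.iterate_add_apply, Nat.sub_add_cancel hk]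
    exact T.parent_iterate_level v
  · have h1 := T.parent_iterate_level (T.parent^[k] v)
    rw [← Function.iterate_add_apply] at h1
    have h2 := T.level_le_of_iterate h1
    omega

lemma iterate_injOn {v : V} {a b : ℕ} (ha : a ≤ T.level v) (hb : b ≤ T.level v)
    (hab : T.parent^[a] v = T.parent^[b] v) : a = b := by
  have h1 := T.level_iterate ha
  have h2 := T.level_iterate hb
  rw [hab] at h1
  omega

lemma level_lt_card (v : V) : T.level v < Fintype.card V := by
  have h : Finset.range (T.level v + 1) ⊆ Finset.range (T.level v + 1) := le_rfl
  have := Finset.card_le_card_of_injOn (fun k => T.parent^[k] v)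
    (fun a _ => Finset.mem_univ _)
    (s := Finset.range (T.level v + 1)) (t := Finset.univ)
    (fun a ha b hb hab => T.iterate_injOn (by simp at ha; omega) (by simp at hb; omega) hab)
  simpa using this

lemma isAncestor_iff {u v : V} :
    T.IsAncestor u v ↔ ∃ k, k ≤ T.level v ∧ T.parent^[k] v = u := by
  constructor
  · rintro ⟨k, _, hk⟩
    by_cases h : k ≤ T.level v
    · exact ⟨k, h, hk⟩
    · refine ⟨T.level v, le_rfl, ?_⟩
      have : T.parent^[k] v = T.root := by
        have : k = (k - T.level v) + T.level v := by omega
        rw [this, Function.iterate_add_apply, T.parent_iterate_level, T.parent_iterate_root]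
      rw [T.parent_iterate_level v, ← hk, this]
  · rintro ⟨k, hk, h⟩
    exact ⟨k, le_trans hk (T.level_lt_card v).le, h⟩

lemma IsAncestor.level_le {u v : V} (h : T.IsAncestor u v) : T.level u ≤ T.level v := by
  obtain ⟨k, hk, h⟩ := (T.isAncestor_iff).1 h
  have := T.level_iterate hk
  rw [h] at this
  omega

lemma isAncestor_trans {u a v : V} (h1 : T.IsAncestor u a) (h2 : T.IsAncestor a v) :
    T.IsAncestor u v := by
  obtain ⟨j, hj, h1⟩ := (T.isAncestor_iff).1 h1
  obtain ⟨k, hk, h2⟩ := (T.isAncestor_iff).1 h2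
  have hla := T.level_iterate hk
  rw [h2] at hla
  refine (T.isAncestor_iff).2 ⟨j + k, by omega, ?_⟩
  rw [Function.iterate_add_apply, h2, h1]

lemma isAncestor_root (v : V) : T.IsAncestor T.root v :=
  (T.isAncestor_iff).2 ⟨T.level v, le_rfl, T.parent_iterate_level v⟩

lemma isAncestor_of_level_le {u u' v : V} (hu : T.IsAncestor u v) (hu' : T.IsAncestor u' v)
    (h : T.level u' ≤ T.level u) : T.IsAncestor u' u := by
  obtain ⟨k, hk, hku⟩ := (T.isAncestor_iff).1 hu
  obtain ⟨k', hk', hku'⟩ := (T.isAncestor_iff).1 hu'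
  have h1 : T.level u = T.level v - k := by rw [← hku]; exact T.level_iterate hk
  have h2 : T.level u' = T.level v - k' := by rw [← hku']; exact T.level_iterate hk'
  refine (T.isAncestor_iff).2 ⟨k' - k, by omega, ?_⟩
  rw [← hku, ← Function.iterate_add_apply, show k' - k + k = k' by omega, hku']

/-- The common-ancestor set of `v` and `w`. -/
noncomputable def commonAnc (v w : V) : Finset V :=
  Finset.univ.filter fun u => T.IsAncestor u v ∧ T.IsAncestor u w

lemma card_commonAnc (v w : V) : (T.commonAnc v w).card = T.lcaLevel v w + 1 := by
  have hroot : T.root ∈ T.commonAnc v w := by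
    simp [commonAnc, T.isAncestor_root]
  obtain ⟨a, ha, hla⟩ := Finset.exists_mem_eq_sup (T.commonAnc v w) ⟨T.root, hroot⟩ T.level
  have hsup : T.lcaLevel v w = T.level a := hla
  have hav : T.IsAncestor a v := ((Finset.mem_filter.1 ha).2).1
  have haw : T.IsAncestor a w := ((Finset.mem_filter.1 ha).2).2
  have hset : T.commonAnc v w =
      (Finset.range (T.level a + 1)).image (fun k => T.parent^[k] a) := by
    apply Finset.ext
    intro u
    simp only [Finset.mem_image, Finset.mem_range, Nat.lt_succ_iff]
    constructor
    · intro hu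
      have hle : T.level u ≤ T.level a := by
        rw [← hsup]
        exact Finset.le_sup (f := T.level) hu
      have huv : T.IsAncestor u v := ((Finset.mem_filter.1 hu).2).1
      have : T.IsAncestor u a := T.isAncestor_of_level_le hav huv hle
      obtain ⟨k, hk, h⟩ := (T.isAncestor_iff).1 this
      exact ⟨k, hk, h⟩
    · rintro ⟨k, hk, h⟩
      have hua : T.IsAncestor u a := (T.isAncestor_iff).2 ⟨k, hk, h⟩
      exact Finset.mem_filter.2 ⟨Finset.mem_univ _,
        T.isAncestor_trans hua hav, T.isAncestor_trans hua haw⟩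
  rw [hset, hsup, Finset.card_image_of_injOn, Finset.card_range]
  intro x hx y hy hxy
  simp only [Finset.mem_coe, Finset.mem_range, Nat.lt_succ_iff] at hx hy
  exact T.iterate_injOn hx hy hxy

lemma card_commonAnc_ne_root (v w : V) :
    (Finset.univ.filter fun u =>
      (T.IsAncestor u v ∧ T.IsAncestor u w) ∧ u ≠ T.root).card = T.lcaLevel v w := by
  have h1 : (Finset.univ.filter fun u =>
        (T.IsAncestor u v ∧ T.IsAncestor u w) ∧ u ≠ T.root)
      = (T.commonAnc v w).erase T.root := by
    rw [← Finset.filter_ne' (T.commonAnc v w) T.root]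
    rw [commonAnc, Finset.filter_filter]
  have hroot : T.root ∈ T.commonAnc v w := by
    simp [commonAnc, T.isAncestor_root]
  rw [h1, Finset.card_erase_of_mem hroot, T.card_commonAnc]
  omega

end TreeOn

/-- The ancestral matrix of a rooted tree `T` satisfies
`C(T) = I_p(T) · I_p(T)ᵀ`; in particular it is a symmetric positive
semidefinite matrix. -/
theorem ancMatrix_eq_pathIncidence_mul_transpose
    {V : Type} [Fintype V] [DecidableEq V] (T : TreeOn V) :
    T.ancMatrix = T.pathIncidence * T.pathIncidenceᵀ ∧
      T.ancMatrix.IsSymm ∧ T.ancMatrix.PosSemidef := by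
  have hmain : T.ancMatrix = T.pathIncidence * T.pathIncidenceᵀ := by
    ext v w
    simp only [TreeOn.ancMatrix, TreeOn.pathIncidence, Matrix.mul_apply, Matrix.transpose_apply,
      Matrix.of_apply]
    have hsum : ∀ e : T.Edge,
        (if T.IsAncestor e.1 v.1 then (1:ℝ) else 0) * (if T.IsAncestor e.1 w.1 then (1:ℝ) else 0)
        = if T.IsAncestor e.1 v.1 ∧ T.IsAncestor e.1 w.1 then 1 else 0 := by
      rintro ⟨u, hu⟩
      by_cases h1 : T.IsAncestor u v.1 <;> by_cases h2 : T.IsAncestor u w.1 <;>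
        simp [h1, h2]
    rw [Finset.sum_congr rfl fun e _ => hsum e, Finset.sum_boole]
    have hcard : (Finset.univ.filter fun e : T.Edge =>
          T.IsAncestor e.1 v.1 ∧ T.IsAncestor e.1 w.1).card
        = (Finset.univ.filter fun u : V =>
          (T.IsAncestor u v.1 ∧ T.IsAncestor u w.1) ∧ u ≠ T.root).card := by
      apply Finset.card_bij (fun e _ => e.1)
      · rintro ⟨u, hu⟩ he
        simp only [Finset.mem_filter, Finset.mem_univ, true_and] at he ⊢
        exact ⟨he, hu⟩
      · intro a _ b _ hab
        exact Subtype.ext hab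
      · intro u hu
        simp only [Finset.mem_filter, Finset.mem_univ, true_and] at hu
        exact ⟨⟨u, hu.2⟩, by simp [hu.1], rfl⟩
    rw [hcard, T.card_commonAnc_ne_root v.1 w.1]
  have hpsd : T.ancMatrix.PosSemidef := by
    rw [hmain]
    have := Matrix.posSemidef_conjTranspose_mul_self (T.pathIncidenceᵀ)
    simpa [Matrix.conjTranspose_eq_transpose_of_trivial, Matrix.transpose_transpose] using this
  refine ⟨hmain, ?_, hpsd⟩
  rw [hmain, Matrix.IsSymm, Matrix.transpose_mul, Matrix.transpose_transpose]
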